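/- arXiv:1405.7573 — 5 statements merged into one kernel-verified Lean document; each statement's English description precedes it below -/
import Mathlib

section
/- Let k be a positive integer and let G be a finite connected simple graph with minimum degree δ(G) and maximum degree Δ(G) satisfying δ(G) < Δ(G) = k + 1. Then F_k(G) = 1. -/
/-!
A vertex `v` of minimum degree has at most `k` neighbours, so `{v}` colors all of them in one
step. From then on every colored vertex has a colored neighbour, hence, as `Δ(G) = k + 1`, at most
`k` non-colored ones; by connectivity some colored vertex has a non-colored neighbour as long as
not everything is colored, so the colored set keeps growing. As `∅` forces nothing, `F_k(G) = 1`.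
-/

/-- One step of the `k`-forcing color change process: a colored vertex (in `S`)
with at most `k` non-colored neighbors causes all of its neighbors to become colored. -/
def kStep {V : Type*} [Fintype V] [DecidableEq V] (G : SimpleGraph V) [DecidableRel G.Adj]
    (k : ℕ) (S : Finset V) : Finset V :=
  S ∪ Finset.univ.filter (fun v => ∃ u ∈ S, G.Adj u v ∧ (G.neighborFinset u \ S).card ≤ k)

/-- `S` is a `k`-forcing set if iterating the color change rule starting from `S`
eventually colors all vertices of `G`. -/
def IsKForcingSet {V : Type*} [Fintype V] [DecidableEq V] (G : SimpleGraph V)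
    [DecidableRel G.Adj] (k : ℕ) (S : Finset V) : Prop :=
  ∃ n : ℕ, (kStep G k)^[n] S = Finset.univ

/-- The `k`-forcing number `F_k(G)`: the minimum cardinality of a `k`-forcing set. -/
noncomputable def kForcingNumber {V : Type*} [Fintype V] [DecidableEq V] (G : SimpleGraph V)
    [DecidableRel G.Adj] (k : ℕ) : ℕ :=
  sInf {m | ∃ S : Finset V, S.card = m ∧ IsKForcingSet G k S}

open Finset

section

variable {V : Type*} [Fintype V] [DecidableEq V] {G : SimpleGraph V} [DecidableRel G.Adj] {k : ℕ}

lemma subset_kStep (S : Finset V) : S ⊆ kStep G k S := subset_union_left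

lemma mem_kStep_of_adj {S : Finset V} {u w : V} (hu : u ∈ S) (huw : G.Adj u w)
    (hcard : #(G.neighborFinset u \ S) ≤ k) : w ∈ kStep G k S :=
  mem_union_right _ (mem_filter.2 ⟨mem_univ w, u, hu, huw, hcard⟩)

lemma mem_or_exists_adj_of_mem_kStep {S : Finset V} {w : V} (hw : w ∈ kStep G k S) :
    w ∈ S ∨ ∃ u ∈ S, G.Adj u w := by
  rcases mem_union.1 hw with hw | hw
  · exact .inl hw
  · obtain ⟨u, hu, huw, -⟩ := (mem_filter.1 hw).2
    exact .inr ⟨u, hu, huw⟩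

lemma kStep_empty : kStep G k (∅ : Finset V) = ∅ := by
  simp [kStep]

lemma not_isKForcingSet_empty [Nonempty V] : ¬ IsKForcingSet G k ∅ := by
  rintro ⟨n, hn⟩
  rw [Function.iterate_fixed kStep_empty] at hn
  exact univ_nonempty.ne_empty hn.symm

lemma IsKForcingSet.of_kStep {S : Finset V} (h : IsKForcingSet G k (kStep G k S)) :
    IsKForcingSet G k S := by
  obtain ⟨n, hn⟩ := h
  exact ⟨n + 1, by rwa [Function.iterate_succ_apply]⟩

def NoIsolatedIn (G : SimpleGraph V) (S : Finset V) : Prop := ∀ u ∈ S, ∃ w ∈ S, G.Adj u w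

lemma NoIsolatedIn.kStep {S : Finset V} (hS : NoIsolatedIn G S) :
    NoIsolatedIn G (kStep G k S) := by
  intro w hw
  rcases mem_or_exists_adj_of_mem_kStep hw with hw | ⟨u, hu, huw⟩
  · obtain ⟨x, hx, hwx⟩ := hS w hw
    exact ⟨x, subset_kStep S hx, hwx⟩
  · exact ⟨u, subset_kStep S hu, huw.symm⟩

lemma noIsolatedIn_kStep_singleton {v w : V} (hvw : G.Adj v w) (hv : G.degree v ≤ k) :
    NoIsolatedIn G (kStep G k {v}) := by
  have hforce : #(G.neighborFinset v \ {v}) ≤ k :=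
    (card_le_card sdiff_subset).trans ((G.card_neighborFinset_eq_degree v).trans_le hv)
  intro u hu
  rcases mem_or_exists_adj_of_mem_kStep hu with hu | ⟨v', hv', hvu⟩
  · rw [mem_singleton.1 hu]
    exact ⟨w, mem_kStep_of_adj (mem_singleton_self v) hvw hforce, hvw⟩
  · rw [mem_singleton.1 hv'] at hvu
    exact ⟨v, subset_kStep _ (mem_singleton_self v), hvu.symm⟩

lemma card_neighborFinset_sdiff_le {S : Finset V} {u z : V} (hdeg : G.degree u ≤ k + 1)
    (hz : z ∈ S) (huz : G.Adj u z) : #(G.neighborFinset u \ S) ≤ k := by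
  have hsub : G.neighborFinset u \ S ⊆ (G.neighborFinset u).erase z := fun x hx =>
    mem_erase.2 ⟨fun h => (mem_sdiff.1 hx).2 (h ▸ hz), (mem_sdiff.1 hx).1⟩
  calc #(G.neighborFinset u \ S) ≤ #((G.neighborFinset u).erase z) := card_le_card hsub
    _ = G.degree u - 1 := by
      rw [card_erase_of_mem ((G.mem_neighborFinset u z).2 huz),
        SimpleGraph.card_neighborFinset_eq_degree]
    _ ≤ k := by omega

lemma ssubset_kStep (hdeg : ∀ u, G.degree u ≤ k + 1) (hconn : G.Connected) {S : Finset V}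
    (hne : S.Nonempty) (hS : NoIsolatedIn G S) (huniv : S ≠ univ) : S ⊂ kStep G k S := by
  obtain ⟨a, ha⟩ := hne
  obtain ⟨b, -, hb⟩ := exists_of_ssubset (ssubset_univ_iff.2 huniv)
  obtain ⟨d, -, hdS, hdS'⟩ := (hconn a b).some.exists_boundary_dart (S : Set V) ha hb
  obtain ⟨z, hz, huz⟩ := hS _ hdS
  refine (ssubset_iff_of_subset (subset_kStep S)).2 ⟨d.snd, ?_, hdS'⟩
  exact mem_kStep_of_adj hdS d.adj (card_neighborFinset_sdiff_le (hdeg _) hz huz)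

lemma isKForcingSet_of_noIsolatedIn (hdeg : ∀ u, G.degree u ≤ k + 1) (hconn : G.Connected)
    {S : Finset V} (hne : S.Nonempty) (hS : NoIsolatedIn G S) : IsKForcingSet G k S := by
  by_cases huniv : S = univ
  · exact ⟨0, huniv⟩
  have hgrow := ssubset_kStep hdeg hconn hne hS huniv
  exact IsKForcingSet.of_kStep
    (isKForcingSet_of_noIsolatedIn hdeg hconn (hne.mono hgrow.subset) hS.kStep)
termination_by Fintype.card V - #S
decreasing_by
  have := card_lt_card hgrow
  have := card_le_univ (kStep G k S)
  omega

lemma isKForcingSet_singleton (hdeg : ∀ u, G.degree u ≤ k + 1) (hconn : G.Connected)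
    {v w : V} (hvw : G.Adj v w) (hv : G.degree v ≤ k) : IsKForcingSet G k {v} :=
  .of_kStep <| isKForcingSet_of_noIsolatedIn hdeg hconn
    ⟨v, subset_kStep _ (mem_singleton_self v)⟩ (noIsolatedIn_kStep_singleton hvw hv)

lemma kForcingNumber_eq_one_of_isKForcingSet_singleton {v : V} (h : IsKForcingSet G k {v}) :
    kForcingNumber G k = 1 := by
  have : Nonempty V := ⟨v⟩
  have hone : 1 ∈ {m | ∃ S : Finset V, #S = m ∧ IsKForcingSet G k S} :=
    ⟨{v}, card_singleton v, h⟩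
  refine le_antisymm (Nat.sInf_le hone) (le_csInf ⟨1, hone⟩ ?_)
  rintro m ⟨S, rfl, hS⟩
  exact card_pos.2 (nonempty_iff_ne_empty.2 (by rintro rfl; exact not_isKForcingSet_empty hS))

end

theorem kForcingNumber_eq_one_of_minDegree_lt_general {V : Type*} [Fintype V] [DecidableEq V]
    (G : SimpleGraph V) [DecidableRel G.Adj] (k : ℕ)
    (hconn : G.Connected) (hδ : G.minDegree < G.maxDegree) (hΔ : G.maxDegree = k + 1) :
    kForcingNumber G k = 1 := by
  have hdeg : ∀ u, G.degree u ≤ k + 1 := fun u => hΔ ▸ G.degree_le_maxDegree u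
  have : Nonempty V := hconn.nonempty
  obtain ⟨v, hv⟩ := G.exists_minimal_degree_vertex
  obtain ⟨x, hx⟩ := G.exists_maximal_degree_vertex
  have : Nontrivial V := nontrivial_of_ne v x fun h => by rw [h] at hv; omega
  obtain ⟨w, hvw⟩ :=
    (G.degree_pos_iff_exists_adj v).1 (hconn.preconnected.degree_pos_of_nontrivial v)
  exact kForcingNumber_eq_one_of_isKForcingSet_singleton
    (isKForcingSet_singleton hdeg hconn hvw (by omega))

/-- If `G` is a connected graph with `δ(G) < Δ(G) = k + 1`, then `F_k(G) = 1`. -/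
theorem kForcingNumber_eq_one_of_minDegree_lt {V : Type*} [Fintype V] [DecidableEq V]
    (G : SimpleGraph V) [DecidableRel G.Adj] (k : ℕ) (hk : 1 ≤ k)
    (hconn : G.Connected) (hδ : G.minDegree < G.maxDegree) (hΔ : G.maxDegree = k + 1) :
    kForcingNumber G k = 1 :=
  kForcingNumber_eq_one_of_minDegree_lt_general G k hconn hδ hΔ
end

section
/- Let k be a positive integer and let G be a finite connected simple graph that is regular of degree k + 1. Then for any edge {u, v} of G, the pair {u, v} is a k-forcing set of G. -/
/-!
If every colored vertex has a colored neighbor and all degrees are at most `k + 1`, then every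
colored vertex has at most `k` non-colored neighbors, so it forces all of them; and the forced
vertices again have a colored neighbor (the one that forced them). Hence the colored set grows
by a full neighborhood at every step, and starting from an edge it swallows a connected graph.
-/

namespace SimpleGraph

def NoIsolatedIn {V : Type*} (G : SimpleGraph V) (S : Finset V) : Prop :=
  ∀ w ∈ S, ∃ x ∈ S, G.Adj w x

lemma noIsolatedIn_pair {V : Type*} [DecidableEq V] {G : SimpleGraph V} {u v : V}
    (huv : G.Adj u v) : G.NoIsolatedIn {u, v} := by
  intro w hw
  rcases Finset.mem_insert.mp hw with rfl | hw
  · exact ⟨v, by simp, huv⟩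
  · rw [Finset.mem_singleton.mp hw]
    exact ⟨u, by simp, huv.symm⟩

variable {V : Type*} [Fintype V] [DecidableEq V] {G : SimpleGraph V} [DecidableRel G.Adj]
  {k : ℕ} {S : Finset V}

lemma subset_kStep : S ⊆ kStep G k S := Finset.subset_union_left

lemma kStep_iterate_mono : Monotone fun n => (kStep G k)^[n] S :=
  monotone_nat_of_le_succ fun n => by
    simpa only [Function.iterate_succ_apply'] using subset_kStep

lemma NoIsolatedIn.kStep (hS : G.NoIsolatedIn S) : G.NoIsolatedIn (kStep G k S) := by
  intro w hw
  rcases Finset.mem_union.mp hw with hw | hw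
  · obtain ⟨x, hx, hwx⟩ := hS w hw
    exact ⟨x, subset_kStep hx, hwx⟩
  · obtain ⟨x, hx, hxw, -⟩ := (Finset.mem_filter.mp hw).2
    exact ⟨x, subset_kStep hx, hxw.symm⟩

lemma NoIsolatedIn.kStep_iterate (hS : G.NoIsolatedIn S) (n : ℕ) :
    G.NoIsolatedIn ((_root_.kStep G k)^[n] S) := by
  induction n with
  | zero => exact hS
  | succ n ih =>
    rw [Function.iterate_succ_apply']
    exact ih.kStep

lemma NoIsolatedIn.mem_kStep_of_adj (hdeg : ∀ w, G.degree w ≤ k + 1)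
    (hS : G.NoIsolatedIn S) {w y : V} (hw : w ∈ S) (hwy : G.Adj w y) :
    y ∈ _root_.kStep G k S := by
  refine Finset.mem_union_right _ (Finset.mem_filter.mpr ⟨Finset.mem_univ _, w, hw, hwy, ?_⟩)
  obtain ⟨x, hx, hwx⟩ := hS w hw
  have hsub : G.neighborFinset w \ S ⊆ (G.neighborFinset w).erase x := fun z hz =>
    have hz := Finset.mem_sdiff.mp hz
    Finset.mem_erase.mpr ⟨fun h => hz.2 (h ▸ hx), hz.1⟩
  calc (G.neighborFinset w \ S).card
      ≤ ((G.neighborFinset w).erase x).card := Finset.card_le_card hsub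
    _ = G.degree w - 1 := Finset.card_erase_of_mem ((G.mem_neighborFinset w x).mpr hwx)
    _ ≤ k := by have := hdeg w; omega

lemma NoIsolatedIn.mem_kStep_iterate_of_walk (hdeg : ∀ w, G.degree w ≤ k + 1)
    (hS : G.NoIsolatedIn S) {a b : V} (p : G.Walk b a) {n : ℕ}
    (ha : a ∈ (_root_.kStep G k)^[n] S) :
    b ∈ (_root_.kStep G k)^[n + p.length] S := by
  induction p with
  | nil => exact ha
  | cons hxy q ih =>
    rw [Walk.length_cons, ← Nat.add_assoc, Function.iterate_succ_apply']
    exact (hS.kStep_iterate _).mem_kStep_of_adj hdeg (ih ha) hxy.symm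

theorem NoIsolatedIn.isKForcingSet (hdeg : ∀ w, G.degree w ≤ k + 1) (hconn : G.Preconnected)
    (hS : G.NoIsolatedIn S) (hne : S.Nonempty) : IsKForcingSet G k S := by
  obtain ⟨a, ha⟩ := hne
  refine ⟨Fintype.card V, Finset.eq_univ_iff_forall.mpr fun w => ?_⟩
  let p := (hconn w a).some.toPath
  have hw := hS.mem_kStep_iterate_of_walk hdeg p.val (n := 0) ha
  rw [Nat.zero_add] at hw
  exact kStep_iterate_mono p.isPath.length_lt.le hw

end SimpleGraph

theorem isKForcingSet_pair_of_regular_general {V : Type*} [Fintype V] [DecidableEq V]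
    (G : SimpleGraph V) [DecidableRel G.Adj] (k : ℕ)
    (hconn : G.Connected) (hreg : G.IsRegularOfDegree (k + 1))
    (u v : V) (huv : G.Adj u v) :
    IsKForcingSet G k {u, v} :=
  (SimpleGraph.noIsolatedIn_pair huv).isKForcingSet (fun w => (hreg w).le) hconn.preconnected
    (Finset.insert_nonempty u {v})

/-- If `G` is a connected graph that is regular of degree `k + 1`, then for any edge
`{u, v}` of `G`, the pair `{u, v}` is a `k`-forcing set of `G`. -/
theorem isKForcingSet_pair_of_regular {V : Type*} [Fintype V] [DecidableEq V]
    (G : SimpleGraph V) [DecidableRel G.Adj] (k : ℕ) (hk : 1 ≤ k)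
    (hconn : G.Connected) (hreg : G.IsRegularOfDegree (k + 1))
    (u v : V) (huv : G.Adj u v) :
    IsKForcingSet G k {u, v} :=
  isKForcingSet_pair_of_regular_general G k hconn hreg u v huv
end

section
/- Let G be a finite connected simple graph with maximum degree Δ(G) ≥ 2 and order n(G). Then the zero forcing number satisfies Z(G) = F_1(G) ≤ ((Δ(G) − 2)·n(G) + 2) / (Δ(G) − 1). -/
/-- The zero forcing number `Z(G) = F_1(G)`. -/
noncomputable def zeroForcingNumber {V : Type*} [Fintype V] [DecidableEq V]
    (G : SimpleGraph V) [DecidableRel G.Adj] : ℕ :=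
  kForcingNumber G 1

/-!
Start from the closed neighbourhood `C` of a vertex of maximum degree `Δ`. While `C ≠ V`,
connectivity gives `u ∈ C` with a neighbour outside `C`; since `u` also has a neighbour inside `C`,
at most `Δ - 1` of its neighbours lie outside, and we add all of them to `C`. Colour every vertex
initially except one new neighbour of `u` per step, which `u` forces once the rest of its
neighbourhood is coloured, and one neighbour of the centre of the initial `C`. There are at least
`(n - Δ - 1) / (Δ - 1)` steps, so `(Δ - 1) Z(G) ≤ (Δ - 2) n + 2`.
-/

open Finset

lemma SimpleGraph.Connected.exists_adj_notMem {V : Type*} {G : SimpleGraph V} {s : Set V}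
    {x y : V} (hconn : G.Connected) (hx : x ∈ s) (hy : y ∉ s) :
    ∃ u ∈ s, ∃ w ∉ s, G.Adj u w := by
  obtain ⟨e, -, he, he'⟩ := (hconn x y).some.exists_boundary_dart s hx hy
  exact ⟨e.fst, he, e.snd, he', e.adj⟩

section Forcing

variable {V : Type*} [Fintype V] [DecidableEq V] (G : SimpleGraph V) [DecidableRel G.Adj]

lemma kStep_mono (k : ℕ) : Monotone (kStep G k) := by
  intro S T hST v hv
  rcases mem_union.1 hv with hv | hv
  · exact mem_union_left _ (hST hv)
  · obtain ⟨-, u, hu, hadj, hcard⟩ := mem_filter.1 hv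
    refine mem_union_right _ (mem_filter.2 ⟨mem_univ _, u, hST hu, hadj, ?_⟩)
    exact (card_le_card (sdiff_subset_sdiff subset_rfl hST)).trans hcard

variable {G}

lemma IsKForcingSet.of_subset_kStep {k : ℕ} {S T : Finset V} (hT : IsKForcingSet G k T)
    (hTS : T ⊆ kStep G k S) : IsKForcingSet G k S := by
  obtain ⟨n, hn⟩ := hT
  refine ⟨n + 1, univ_subset_iff.1 ?_⟩
  rw [Function.iterate_succ_apply, ← hn]
  exact (kStep_mono G k).iterate n hTS

lemma IsKForcingSet.erase_of_adj {S : Finset V} {u w : V} (hS : IsKForcingSet G 1 S)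
    (hu : u ∈ S) (huw : G.Adj u w) (hN : G.neighborFinset u ⊆ S) :
    IsKForcingSet G 1 (S.erase w) := by
  refine hS.of_subset_kStep fun x hx => ?_
  obtain rfl | hxw := eq_or_ne x w
  · refine mem_union_right _ (mem_filter.2 ⟨mem_univ _, u, mem_erase.2 ⟨huw.ne, hu⟩, huw, ?_⟩)
    refine card_le_one.2 fun a ha b hb => ?_
    have hx_only : ∀ y ∈ G.neighborFinset u \ S.erase x, y = x := fun y hy => by
      obtain ⟨hyN, hyS⟩ := mem_sdiff.1 hy
      by_contra hyx
      exact hyS (mem_erase.2 ⟨hyx, hN hyN⟩)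
    rw [hx_only a ha, hx_only b hb]
  · exact mem_union_left _ (mem_erase.2 ⟨hxw, hx⟩)

lemma kForcingNumber_le_card {k : ℕ} {S : Finset V} (hS : IsKForcingSet G k S) :
    kForcingNumber G k ≤ #S :=
  Nat.sInf_le ⟨S, rfl, hS⟩

lemma card_neighborFinset_sdiff_lt_degree {C : Finset V} {u v : V} (hv : v ∈ C)
    (huv : G.Adj u v) : #(G.neighborFinset u \ C) < G.degree u := by
  rw [← G.card_neighborFinset_eq_degree]
  refine card_lt_card ((ssubset_iff_of_subset sdiff_subset).2 ⟨v, ?_, ?_⟩)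
  · exact (G.mem_neighborFinset u v).2 huv
  · exact fun h => (mem_sdiff.1 h).2 hv

/-- The bound reads `#S ≤ #C + d / (d + 1) · #Cᶜ`: each step adds at most `d + 1` vertices
to `C`, one of which is forced and need not be coloured initially. -/
theorem exists_isKForcingSet_superset {d : ℕ} (hdeg : G.maxDegree ≤ d + 2)
    (hconn : G.Connected) (C : Finset V) (hC : C.Nonempty)
    (hCadj : ∀ v ∈ C, ∃ u ∈ C, G.Adj u v) :
    ∃ S, C ⊆ S ∧ IsKForcingSet G 1 S ∧ (d + 1) * #S ≤ d * Fintype.card V + #C := by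
  by_cases hCV : C = univ
  · subst hCV
    exact ⟨univ, subset_rfl, ⟨0, rfl⟩, by rw [card_univ]; nlinarith⟩
  obtain ⟨x, hx⟩ := hC
  obtain ⟨y, hy⟩ : ∃ y, y ∉ C := by simpa [eq_univ_iff_forall] using hCV
  obtain ⟨u, hu, w, hw, huw⟩ := hconn.exists_adj_notMem (s := C) hx hy
  have hU : #(G.neighborFinset u \ C) ≤ d + 1 := by
    obtain ⟨u', hu', hu'u⟩ := hCadj u hu
    have := card_neighborFinset_sdiff_lt_degree hu' hu'u.symm
    have := G.degree_le_maxDegree u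
    omega
  set U := G.neighborFinset u \ C
  have hwU : w ∈ U := mem_sdiff.2 ⟨(G.mem_neighborFinset u w).2 huw, hw⟩
  obtain ⟨S, hCUS, hS, hcard⟩ := exists_isKForcingSet_superset hdeg hconn (C ∪ U)
    ⟨x, mem_union_left _ hx⟩ fun v hv => by
      rcases mem_union.1 hv with hv | hv
      · obtain ⟨x, hx, hxv⟩ := hCadj v hv
        exact ⟨x, mem_union_left _ hx, hxv⟩
      · exact ⟨u, mem_union_left _ hu, (G.mem_neighborFinset u v).1 (mem_sdiff.1 hv).1⟩
  have hNS : G.neighborFinset u ⊆ S := fun v hv =>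
    hCUS <| mem_union.2 <| or_iff_not_imp_left.2 fun hvC => mem_sdiff.2 ⟨hv, hvC⟩
  refine ⟨S.erase w, subset_erase.2 ⟨subset_union_left.trans hCUS, hw⟩,
    hS.erase_of_adj (hCUS (mem_union_left _ hu)) huw hNS, ?_⟩
  have hwS := card_erase_add_one (hCUS (mem_union_right _ hwU))
  rw [card_union_of_disjoint disjoint_sdiff] at hcard
  nlinarith
termination_by #Cᶜ
decreasing_by
  exact card_lt_card (compl_ssubset_compl.2
    ((ssubset_iff_of_subset subset_union_left).2 ⟨w, mem_union_right _ hwU, hw⟩))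

theorem maxDegree_sub_one_mul_zeroForcingNumber_le (hconn : G.Connected)
    (hΔ : 2 ≤ G.maxDegree) :
    (G.maxDegree - 1) * zeroForcingNumber G ≤ (G.maxDegree - 2) * Fintype.card V + 2 := by
  have : Nonempty V := hconn.nonempty
  obtain ⟨u, hu⟩ := G.exists_maximal_degree_vertex
  obtain ⟨w, hw⟩ : (G.neighborFinset u).Nonempty := by
    rw [← card_pos, G.card_neighborFinset_eq_degree]
    omega
  have huw : G.Adj u w := (G.mem_neighborFinset u w).1 hw
  have hC : #(insert u (G.neighborFinset u)) = G.maxDegree + 1 := by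
    rw [card_insert_of_notMem (G.notMem_neighborFinset_self u), G.card_neighborFinset_eq_degree,
      hu]
  obtain ⟨S, hCS, hS, hcard⟩ := exists_isKForcingSet_superset (d := G.maxDegree - 2)
    (by omega) hconn _ (insert_nonempty u _)
    fun v hv => by
      rcases mem_insert.1 hv with rfl | hv
      · exact ⟨w, mem_insert_of_mem hw, huw.symm⟩
      · exact ⟨u, mem_insert_self u _, (G.mem_neighborFinset u v).1 hv⟩
  have hZ : zeroForcingNumber G ≤ #(S.erase w) := kForcingNumber_le_card <|
    hS.erase_of_adj (hCS (mem_insert_self u _)) huw ((subset_insert u _).trans hCS)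
  have hwS := card_erase_add_one (hCS (mem_insert_of_mem hw))
  rw [hC] at hcard
  obtain ⟨d, hd⟩ : ∃ d, G.maxDegree = d + 2 := ⟨G.maxDegree - 2, by omega⟩
  rw [hd, Nat.add_sub_cancel] at hcard ⊢
  rw [show d + 2 - 1 = d + 1 by omega]
  nlinarith [Nat.mul_le_mul_left (d + 1) hZ]

end Forcing

/-- If `G` is connected with `Δ(G) ≥ 2`, then `Z(G) = F_1(G) ≤ ((Δ-2)n + 2) / (Δ-1)`. -/
theorem zeroForcingNumber_le_simplified {V : Type*} [Fintype V] [DecidableEq V]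
    (G : SimpleGraph V) [DecidableRel G.Adj]
    (hconn : G.Connected) (hΔ : 2 ≤ G.maxDegree) :
    zeroForcingNumber G = kForcingNumber G 1 ∧
    (zeroForcingNumber G : ℝ) ≤
      (((G.maxDegree : ℝ) - 2) * (Fintype.card V) + 2) / ((G.maxDegree : ℝ) - 1) := by
  refine ⟨rfl, ?_⟩
  have hnat := maxDegree_sub_one_mul_zeroForcingNumber_le hconn hΔ
  have hΔ' : (2 : ℝ) ≤ G.maxDegree := by exact_mod_cast hΔ
  rw [le_div_iff₀ (by linarith)]
  rw [← Nat.cast_le (α := ℝ)] at hnat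
  push_cast [Nat.cast_sub (one_le_two.trans hΔ), Nat.cast_sub hΔ] at hnat
  linarith
end

section
/- Let k and Δ be positive integers with Δ ≥ k + 2, and let n be a real number with n ≥ Δ + 1. Then ((Δ − k − 1)·n + 2k) / (Δ − 1) ≤ ((Δ − 2)·n + 2) / (Δ + k − 2), with equality when k = 1. (That is, for k ≥ 2 the bound of Corollary 6 is at least as strong as the k-connected bound of Amos, Caro, Davila and Pepper, and for k = 1 the two bounds coincide.) -/
/-!
After clearing the (positive) denominators, the difference of the two sides factors as
`(k - 1) k (n - Δ - 1) + (k - 1)(k - 2)(Δ - 1)`; both products of consecutive integers are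
nonnegative, and both vanish when `k = 1`.
-/

lemma Int.cast_mul_cast_sub_one_nonneg (m : ℤ) : 0 ≤ (m : ℝ) * (m - 1) := by
  have h : 0 ≤ m * (m - 1) := by
    rcases le_or_gt m 0 with hm | hm
    · exact mul_nonneg_of_nonpos_of_nonpos hm (by omega)
    · exact mul_nonneg hm.le (by omega)
  exact_mod_cast h

lemma Nat.cast_sub_one_mul_cast_nonneg (k : ℕ) : 0 ≤ ((k : ℝ) - 1) * k := by
  simpa [mul_comm] using Int.cast_mul_cast_sub_one_nonneg k

lemma Nat.cast_sub_one_mul_cast_sub_two_nonneg (k : ℕ) : 0 ≤ ((k : ℝ) - 1) * (k - 2) := by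
  have h := Int.cast_mul_cast_sub_one_nonneg ((k : ℤ) - 1)
  push_cast at h
  linarith

lemma cross_mul_sub_eq (k D n : ℝ) :
    ((D - 2) * n + 2) * (D - 1) - ((D - k - 1) * n + 2 * k) * (D + k - 2) =
      (k - 1) * k * (n - D - 1) + (k - 1) * (k - 2) * (D - 1) := by
  ring

lemma kconnected_bound_le_of_add_one_le (k : ℕ) {D n : ℝ} (hD : 1 < D) (hkD : 2 < D + k)
    (hn : D + 1 ≤ n) :
    ((D - k - 1) * n + 2 * k) / (D - 1) ≤ ((D - 2) * n + 2) / (D + k - 2) := by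
  rw [div_le_div_iff₀ (by linarith) (by linarith), ← sub_nonneg, cross_mul_sub_eq]
  have h₁ : 0 ≤ ((k : ℝ) - 1) * k * (n - D - 1) :=
    mul_nonneg (Nat.cast_sub_one_mul_cast_nonneg k) (by linarith)
  have h₂ : 0 ≤ ((k : ℝ) - 1) * (k - 2) * (D - 1) :=
    mul_nonneg (Nat.cast_sub_one_mul_cast_sub_two_nonneg k) (by linarith)
  linarith

/-- Numerical comparison: for `Δ ≥ k + 2` and `n ≥ Δ + 1`,
`((Δ-k-1)n + 2k)/(Δ-1) ≤ ((Δ-2)n + 2)/(Δ+k-2)`, with equality when `k = 1`. -/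
theorem bound_comparison_kconnected (k Δ : ℕ) (hk : 1 ≤ k) (hΔ : k + 2 ≤ Δ)
    (n : ℝ) (hn : (Δ : ℝ) + 1 ≤ n) :
    (((Δ : ℝ) - k - 1) * n + 2 * k) / ((Δ : ℝ) - 1) ≤
      (((Δ : ℝ) - 2) * n + 2) / ((Δ : ℝ) + k - 2) ∧
    (k = 1 →
      (((Δ : ℝ) - k - 1) * n + 2 * k) / ((Δ : ℝ) - 1) =
        (((Δ : ℝ) - 2) * n + 2) / ((Δ : ℝ) + k - 2)) := by
  have hk' : (1 : ℝ) ≤ k := by exact_mod_cast hk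
  have hΔ' : (k : ℝ) + 2 ≤ Δ := by exact_mod_cast hΔ
  refine ⟨kconnected_bound_le_of_add_one_le k (by linarith) (by linarith) hn, ?_⟩
  rintro rfl
  push_cast
  ring_nf
end

section
/- Let k and Δ be positive integers with Δ ≥ k + 2, let m be a real number with 1 ≤ m ≤ k, and let n be a real number with n ≥ Δ + 1. Then ((Δ − k − 1)·n + 2k) / (Δ − 1) ≤ (Δ − k + 1)·n / (Δ − k + 1 + m). (That is, the bound of Corollary 6 is at least as strong as the degree bound of Amos, Caro, Davila and Pepper, in which m = min{δ, k}.) -/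
/-!
Write `a = Δ - k + 1`, so that `Δ - k - 1 = a - 2`, `Δ - 1 = a + k - 2` and `Δ + 1 = a + k`.
Clearing denominators, the comparison becomes `2k(a + m) ≤ n(a(k - m) + 2m)`. The right side
is nondecreasing in `n`, and at `n = a + k` it exceeds the left side by `a(k - m)(a + k - 2) ≥ 0`.
-/

lemma two_mul_mul_add_le_mul {a k m n : ℝ} (ha : 0 ≤ a) (hm : 0 ≤ m) (hmk : m ≤ k)
    (hak : 2 ≤ a + k) (hn : a + k ≤ n) :
    2 * k * (a + m) ≤ n * (a * (k - m) + 2 * m) := by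
  have hslope : 0 ≤ a * (k - m) + 2 * m := by nlinarith
  have hgap : 0 ≤ a * (k - m) * (a + k - 2) :=
    mul_nonneg (mul_nonneg ha (sub_nonneg.2 hmk)) (sub_nonneg.2 hak)
  calc 2 * k * (a + m)
      = (a + k) * (a * (k - m) + 2 * m) - a * (k - m) * (a + k - 2) := by ring
    _ ≤ (a + k) * (a * (k - m) + 2 * m) := by linarith
    _ ≤ n * (a * (k - m) + 2 * m) := mul_le_mul_of_nonneg_right hn hslope

lemma sub_two_mul_add_div_le_mul_div {a k m n : ℝ} (ha : 0 < a) (hm : 0 ≤ m) (hmk : m ≤ k)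
    (hak : 2 < a + k) (hn : a + k ≤ n) :
    ((a - 2) * n + 2 * k) / (a + k - 2) ≤ a * n / (a + m) := by
  rw [div_le_div_iff₀ (by linarith) (by linarith)]
  linear_combination two_mul_mul_add_le_mul ha.le hm hmk hak.le hn

theorem bound_comparison_degree_general (k Δ : ℕ) (hΔ : k + 2 ≤ Δ)
    (m : ℝ) (hm1 : 1 ≤ m) (hmk : m ≤ (k : ℝ))
    (n : ℝ) (hn : (Δ : ℝ) + 1 ≤ n) :
    (((Δ : ℝ) - k - 1) * n + 2 * k) / ((Δ : ℝ) - 1) ≤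
      ((Δ : ℝ) - k + 1) * n / ((Δ : ℝ) - k + 1 + m) := by
  have hΔ' : (k : ℝ) + 2 ≤ Δ := by exact_mod_cast hΔ
  have key := sub_two_mul_add_div_le_mul_div (a := (Δ : ℝ) - k + 1) (by linarith)
    (by linarith) hmk (by linarith) (by linarith : (Δ : ℝ) - k + 1 + k ≤ n)
  convert key using 2 <;> ring

/-- Numerical comparison: for `Δ ≥ k + 2`, `1 ≤ m ≤ k` and `n ≥ Δ + 1`,
`((Δ-k-1)n + 2k)/(Δ-1) ≤ (Δ-k+1)n/(Δ-k+1+m)`. -/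
theorem bound_comparison_degree (k Δ : ℕ) (hk : 1 ≤ k) (hΔ : k + 2 ≤ Δ)
    (m : ℝ) (hm1 : 1 ≤ m) (hmk : m ≤ (k : ℝ))
    (n : ℝ) (hn : (Δ : ℝ) + 1 ≤ n) :
    (((Δ : ℝ) - k - 1) * n + 2 * k) / ((Δ : ℝ) - 1) ≤
      ((Δ : ℝ) - k + 1) * n / ((Δ : ℝ) - k + 1 + m) :=
  bound_comparison_degree_general k Δ hΔ m hm1 hmk n hn
end
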